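/- Let n ≥ 1 and let J² : Λ²(gl(n,ℝ)) → (ℝⁿ → Λ²(ℝⁿ)) be the linear map determined by J²(A ∧ B)(x) = (Aᵀx) ∧ (Bᵀx). Then J² is surjective onto the space of quadratic bivector fields: for every family (Q_{jl})_{1 ≤ j < l ≤ n} of homogeneous quadratic polynomial functions Q_{jl} : ℝⁿ → ℝ there exists r ∈ Λ²(gl(n,ℝ)) such that J²(r)(x) = Σ_{j<l} Q_{jl}(x) (e_j ∧ e_l) for all x ∈ ℝⁿ. -/

import Mathlib

open scoped Matrix

theorem Matrix.transpose_single_one_mulVec {R n : Type*} [Semiring R] [Fintype n] [DecidableEq n]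
    (i j : n) (x : n → R) : (single i j (1 : R))ᵀ *ᵥ x = x i • Pi.single j 1 := by
  rw [transpose_single, single_mulVec]
  ext m
  by_cases hm : m = j <;> simp [hm]

theorem ExteriorAlgebra.ιMulti_two_smul {R M : Type*} [CommRing R] [AddCommGroup M] [Module R M]
    (a b : R) (u v : M) :
    ιMulti R 2 ![a • u, b • v] = (a * b) • ιMulti R 2 ![u, v] := by
  simp [ιMulti_apply, smul_smul, mul_comm]

/-- The monomial `x_i x_k e_j ∧ e_l` is the image of `E_{ij} ∧ E_{kl}`, and the coefficients
of the quadratic forms are read off these monomials. -/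
theorem stmt_8_general (n : ℕ)
    (J2 : ⋀[ℝ]^2 (Matrix (Fin n) (Fin n) ℝ) →ₗ[ℝ]
          ((Fin n → ℝ) → ExteriorAlgebra ℝ (Fin n → ℝ)))
    (hJ2 : ∀ (A B : Matrix (Fin n) (Fin n) ℝ) (x : Fin n → ℝ),
      J2 ⟨ExteriorAlgebra.ιMulti ℝ 2 ![A, B],
          ExteriorAlgebra.ιMulti_range ℝ 2 (Set.mem_range_self _)⟩ x
        = ExteriorAlgebra.ιMulti ℝ 2 ![Aᵀ *ᵥ x, Bᵀ *ᵥ x])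
    (Q : Fin n → Fin n → (Fin n → ℝ) → ℝ)
    (hQ : ∀ j l : Fin n, ∃ c : Fin n → Fin n → ℝ,
      ∀ x : Fin n → ℝ, Q j l x = ∑ i : Fin n, ∑ k : Fin n, c i k * x i * x k) :
    ∃ r : ⋀[ℝ]^2 (Matrix (Fin n) (Fin n) ℝ),
      ∀ x : Fin n → ℝ,
        J2 r x = ∑ j : Fin n, ∑ l : Fin n,
          (if j < l then Q j l x else 0) •
            ExteriorAlgebra.ιMulti ℝ 2
              ![(Pi.single j (1:ℝ) : Fin n → ℝ), (Pi.single l (1:ℝ) : Fin n → ℝ)] := by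
  choose c hc using hQ
  refine ⟨∑ j, ∑ l, ∑ i, ∑ k, (if j < l then c j l i k else 0) •
    ⟨ExteriorAlgebra.ιMulti ℝ 2 ![Matrix.single i j 1, Matrix.single k l 1],
      ExteriorAlgebra.ιMulti_range ℝ 2 (Set.mem_range_self _)⟩, fun x => ?_⟩
  simp only [map_sum, map_smul, Finset.sum_apply, Pi.smul_apply, hJ2,
    Matrix.transpose_single_one_mulVec, ExteriorAlgebra.ιMulti_two_smul, smul_smul,
    ← Finset.sum_smul, hc]
  congr! 3 with j _ l _
  split_ifs <;> simp [mul_assoc]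

/-- The map `J² : Λ²(gl(n,ℝ)) → (ℝⁿ → Λ²(ℝⁿ))` determined by
`J²(A ∧ B)(x) = (Aᵀx) ∧ (Bᵀx)` is surjective onto the space of quadratic
bivector fields: for every family `(Q_{jl})_{j<l}` of homogeneous quadratic
polynomial functions on `ℝⁿ` there is `r ∈ Λ²(gl(n,ℝ))` with
`J²(r)(x) = Σ_{j<l} Q_{jl}(x) (e_j ∧ e_l)` for all `x`. -/
theorem stmt_8 (n : ℕ) (hn : 1 ≤ n)
    (J2 : ⋀[ℝ]^2 (Matrix (Fin n) (Fin n) ℝ) →ₗ[ℝ]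
          ((Fin n → ℝ) → ExteriorAlgebra ℝ (Fin n → ℝ)))
    (hJ2 : ∀ (A B : Matrix (Fin n) (Fin n) ℝ) (x : Fin n → ℝ),
      J2 ⟨ExteriorAlgebra.ιMulti ℝ 2 ![A, B],
          ExteriorAlgebra.ιMulti_range ℝ 2 (Set.mem_range_self _)⟩ x
        = ExteriorAlgebra.ιMulti ℝ 2 ![Aᵀ *ᵥ x, Bᵀ *ᵥ x])
    (Q : Fin n → Fin n → (Fin n → ℝ) → ℝ)
    (hQ : ∀ j l : Fin n, ∃ c : Fin n → Fin n → ℝ,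
      ∀ x : Fin n → ℝ, Q j l x = ∑ i : Fin n, ∑ k : Fin n, c i k * x i * x k) :
    ∃ r : ⋀[ℝ]^2 (Matrix (Fin n) (Fin n) ℝ),
      ∀ x : Fin n → ℝ,
        J2 r x = ∑ j : Fin n, ∑ l : Fin n,
          (if j < l then Q j l x else 0) •
            ExteriorAlgebra.ιMulti ℝ 2
              ![(Pi.single j (1:ℝ) : Fin n → ℝ), (Pi.single l (1:ℝ) : Fin n → ℝ)] :=
  stmt_8_general n J2 hJ2 Q hQ
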